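/- Let (a_t)_{t≥0} be a nonnegative sequence satisfying a_t ≤ (1 + c/t) a_{t-1} + b/t for all t ≥ 1, with a_{t₀} = 0 for some t₀ ≥ 1, where c, b > 0. Then for all T ≥ t₀, a_T ≤ (b/c) (T/t₀)^c. -/

import Mathlib

/-! `u_T = (b/c)((T/t₀)^c - 1)` vanishes at `t₀` and is a supersolution of the recursion, since
`1 + c/(T+1) ≤ (1 + 1/T)^c` by `1 + x ≤ eˣ` and `log (1 + 1/T) ≥ 1/(T+1)`. As the coefficients
`1 + c/t` are nonnegative, induction from `t₀` keeps `a` below `u`. -/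

open Real

theorem le_of_le_mul_add_of_mul_add_le {a u α β : ℕ → ℝ} {t₀ : ℕ}
    (hα : ∀ t, t₀ ≤ t → 0 ≤ α (t + 1))
    (ha : ∀ t, t₀ ≤ t → a (t + 1) ≤ α (t + 1) * a t + β (t + 1))
    (hu : ∀ t, t₀ ≤ t → α (t + 1) * u t + β (t + 1) ≤ u (t + 1))
    (h₀ : a t₀ ≤ u t₀) : ∀ T, t₀ ≤ T → a T ≤ u T := by
  intro T hT
  induction T, hT using Nat.le_induction with
  | base => exact h₀
  | succ t ht ih =>
    calc a (t + 1) ≤ α (t + 1) * a t + β (t + 1) := ha t ht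
      _ ≤ α (t + 1) * u t + β (t + 1) := by gcongr; exact hα t ht
      _ ≤ u (t + 1) := hu t ht

theorem one_add_mul_one_sub_inv_le_rpow {y c : ℝ} (hy : 0 < y) (hc : 0 ≤ c) :
    1 + c * (1 - y⁻¹) ≤ y ^ c :=
  calc 1 + c * (1 - y⁻¹) ≤ 1 + c * log y := by gcongr; exact one_sub_inv_le_log_of_pos hy
    _ ≤ exp (c * log y) := by linarith [add_one_le_exp (c * log y)]
    _ = y ^ c := by rw [rpow_def_of_pos hy, mul_comm]

theorem one_add_div_succ_mul_rpow_le {s τ c : ℝ} (hs : 0 < s) (hτ : 0 < τ) (hc : 0 ≤ c) :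
    (1 + c / (s + 1)) * (s / τ) ^ c ≤ ((s + 1) / τ) ^ c :=
  calc (1 + c / (s + 1)) * (s / τ) ^ c ≤ ((s + 1) / s) ^ c * (s / τ) ^ c := by
        gcongr
        calc 1 + c / (s + 1) = 1 + c * (1 - ((s + 1) / s)⁻¹) := by field_simp; ring
          _ ≤ ((s + 1) / s) ^ c := one_add_mul_one_sub_inv_le_rpow (by positivity) hc
    _ = ((s + 1) / τ) ^ c := by
        rw [← mul_rpow (by positivity) (by positivity)]
        field_simp

theorem one_add_div_succ_mul_add_le {s τ b c : ℝ} (hs : 0 < s) (hτ : 0 < τ) (hb : 0 ≤ b)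
    (hc : 0 < c) :
    (1 + c / (s + 1)) * (b / c * ((s / τ) ^ c - 1)) + b / (s + 1)
      ≤ b / c * (((s + 1) / τ) ^ c - 1) :=
  calc (1 + c / (s + 1)) * (b / c * ((s / τ) ^ c - 1)) + b / (s + 1)
        = b / c * ((1 + c / (s + 1)) * (s / τ) ^ c) - b / c := by field_simp; ring
    _ ≤ b / c * ((s + 1) / τ) ^ c - b / c := by
        gcongr; exact one_add_div_succ_mul_rpow_le hs hτ hc.le
    _ = b / c * (((s + 1) / τ) ^ c - 1) := by ring

theorem gronwall_recursion_general (a : ℕ → ℝ) (b c : ℝ) (hb : 0 < b) (hc : 0 < c)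
    (hrec : ∀ t : ℕ, 1 ≤ t → a t ≤ (1 + c / t) * a (t - 1) + b / t)
    (t₀ : ℕ) (ht₀ : 1 ≤ t₀) (hzero : a t₀ = 0) :
    ∀ T : ℕ, t₀ ≤ T → a T ≤ (b / c) * ((T : ℝ) / (t₀ : ℝ)) ^ c := by
  have ht₀' : (0 : ℝ) < t₀ := by exact_mod_cast ht₀
  have hcmp := le_of_le_mul_add_of_mul_add_le (α := fun t : ℕ ↦ 1 + c / t)
    (β := fun t : ℕ ↦ b / t) (u := fun T : ℕ ↦ b / c * ((T / t₀ : ℝ) ^ c - 1))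
    (fun t _ ↦ by positivity)
    (fun t _ ↦ by simpa using hrec (t + 1) (by omega))
    (fun t ht ↦ by
      push_cast
      exact one_add_div_succ_mul_add_le (by exact_mod_cast ht₀.trans ht) ht₀' hb.le hc)
    (by simp [hzero, div_self ht₀'.ne'])
  intro T hT
  calc a T ≤ b / c * ((T / t₀ : ℝ) ^ c - 1) := hcmp T hT
    _ ≤ b / c * (T / t₀ : ℝ) ^ c := by gcongr; linarith

/-- Discrete Gronwall-type recursion: a nonnegative sequence with
`a_t ≤ (1 + c/t) a_{t-1} + b/t` and `a_{t₀} = 0` satisfies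
`a_T ≤ (b/c)(T/t₀)^c` for all `T ≥ t₀`. -/
theorem gronwall_recursion (a : ℕ → ℝ) (b c : ℝ) (hb : 0 < b) (hc : 0 < c)
    (ha : ∀ t, 0 ≤ a t)
    (hrec : ∀ t : ℕ, 1 ≤ t → a t ≤ (1 + c / t) * a (t - 1) + b / t)
    (t₀ : ℕ) (ht₀ : 1 ≤ t₀) (hzero : a t₀ = 0) :
    ∀ T : ℕ, t₀ ≤ T → a T ≤ (b / c) * ((T : ℝ) / (t₀ : ℝ)) ^ c :=
  gronwall_recursion_general a b c hb hc hrec t₀ ht₀ hzero
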